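/- arXiv:1808.10188 — 2 statements merged into one kernel-verified Lean document; each statement's English description precedes it below -/
import Mathlib

section
/- Let a₁ = E[‖S − M‖_F²] > 0 and a₂ = ‖M − ηI‖_F² where η = tr(M)/p, for a random symmetric matrix S with E[S] = M. Then the minimizer over (α, β) ∈ ℝ² of MSE(α,β) = β²a₁ + ‖αI − (1−β)M‖_F² is given by β₀ = a₂/(a₂ + a₁) and α₀ = (1 − β₀)η, and the minimum value equals (1 − β₀)·a₂. -/
/-!
Since `M - ηI` is traceless, it is orthogonal to `I` for the trace form `⟨A, B⟩ = tr(AᵀB)`, so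
writing `αI - (1 - β)M = (α - (1 - β)η)I - (1 - β)(M - ηI)` gives
`MSE(α, β) = p(α - (1 - β)η)² + β²a₁ + (1 - β)²a₂`.
Completing the square in `β` turns the last two terms into `(a₁ + a₂)(β - β₀)² + (1 - β₀)a₂`.
-/

open Matrix

namespace Matrix

variable {m n R : Type*} [Fintype m] [Fintype n]

theorem trace_transpose_mul_comm [CommSemiring R] (A B : Matrix m n R) :
    (Aᵀ * B).trace = (Bᵀ * A).trace := by
  rw [← trace_transpose, transpose_mul, transpose_transpose]

theorem trace_transpose_mul_self_add_of_trace_transpose_mul_eq_zero [CommRing R]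
    {A B : Matrix m n R} (h : (Aᵀ * B).trace = 0) :
    ((A + B)ᵀ * (A + B)).trace = (Aᵀ * A).trace + (Bᵀ * B).trace := by
  rw [transpose_add, Matrix.add_mul, Matrix.mul_add, Matrix.mul_add, trace_add, trace_add,
    trace_add, trace_transpose_mul_comm B A, h]
  ring

theorem trace_transpose_mul_self_nonneg (A : Matrix m n ℝ) : 0 ≤ (Aᵀ * A).trace := by
  simpa using (posSemidef_conjTranspose_mul_self A).trace_nonneg

variable [DecidableEq n]

theorem trace_sub_trace_div_card_smul_one [Field R] [CharZero R] (M : Matrix n n R) :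
    (M - (M.trace / Fintype.card n) • (1 : Matrix n n R)).trace = 0 := by
  rcases isEmpty_or_nonempty n with _ | _
  · simp [trace]
  · rw [trace_sub, trace_smul, trace_one, smul_eq_mul,
      div_mul_cancel₀ _ (Nat.cast_ne_zero.2 Fintype.card_ne_zero), sub_self]

theorem trace_transpose_mul_self_smul_one_sub_smul [CommRing R] {M : Matrix n n R} {η : R}
    (hη : (M - η • 1).trace = 0) (α r : R) :
    ((α • 1 - r • M)ᵀ * (α • 1 - r • M)).trace
      = Fintype.card n * (α - r * η) ^ 2 + r ^ 2 * ((M - η • 1)ᵀ * (M - η • 1)).trace := by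
  have hsplit : α • 1 - r • M = (α - r * η) • (1 : Matrix n n R) + (-r) • (M - η • 1) := by
    module
  rw [hsplit, trace_transpose_mul_self_add_of_trace_transpose_mul_eq_zero]
  · simp only [transpose_smul, transpose_one, smul_mul_smul_comm, Matrix.one_mul, trace_smul,
      trace_one, smul_eq_mul]
    ring
  · simp [trace_smul, hη]

end Matrix

theorem sq_mul_add_one_sub_sq_mul_eq {K : Type*} [Field K] {a₁ a₂ : K} (h : a₂ + a₁ ≠ 0) (β : K) :
    β ^ 2 * a₁ + (1 - β) ^ 2 * a₂
      = (a₂ + a₁) * (β - a₂ / (a₂ + a₁)) ^ 2 + (1 - a₂ / (a₂ + a₁)) * a₂ := by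
  field_simp
  ring

theorem optimal_shrinkage_minimizer_general {p : ℕ}
    (M : Matrix (Fin p) (Fin p) ℝ)
    (a₁ : ℝ) (ha₁ : 0 < a₁)
    (η a₂ : ℝ) (hη : η = M.trace / p)
    (ha₂ : a₂ = ((M - η • (1 : Matrix (Fin p) (Fin p) ℝ))ᵀ * (M - η • 1)).trace)
    (MSE : ℝ → ℝ → ℝ)
    (hMSE : ∀ α β : ℝ, MSE α β
      = β^2 * a₁ + ((α • (1 : Matrix (Fin p) (Fin p) ℝ) - (1 - β) • M)ᵀ
          * (α • 1 - (1 - β) • M)).trace)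
    (β₀ α₀ : ℝ) (hβ₀ : β₀ = a₂ / (a₂ + a₁)) (hα₀ : α₀ = (1 - β₀) * η) :
    (∀ α β : ℝ, MSE α₀ β₀ ≤ MSE α β) ∧ MSE α₀ β₀ = (1 - β₀) * a₂ := by
  have hcentered : (M - η • 1).trace = 0 := by
    simpa [hη] using trace_sub_trace_div_card_smul_one M
  have hsum : 0 < a₂ + a₁ := by
    have ha₂_nonneg := ha₂ ▸ trace_transpose_mul_self_nonneg (M - η • 1)
    positivity
  have hdecomp : ∀ α β, MSE α β
      = p * (α - (1 - β) * η) ^ 2 + (a₂ + a₁) * (β - β₀) ^ 2 + (1 - β₀) * a₂ := by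
    intro α β
    rw [hMSE, trace_transpose_mul_self_smul_one_sub_smul hcentered, ← ha₂, Fintype.card_fin, hβ₀]
    linear_combination sq_mul_add_one_sub_sq_mul_eq hsum.ne' β
  have hmin : MSE α₀ β₀ = (1 - β₀) * a₂ := by simp [hdecomp, hα₀]
  refine ⟨fun α β => ?_, hmin⟩
  rw [hmin, hdecomp]
  have hsq : 0 ≤ (p : ℝ) * (α - (1 - β) * η) ^ 2 + (a₂ + a₁) * (β - β₀) ^ 2 := by positivity
  linarith

theorem optimal_shrinkage_minimizer {p : ℕ} (hp : 0 < p)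
    (M : Matrix (Fin p) (Fin p) ℝ) (hM : M.PosDef)
    (a₁ : ℝ) (ha₁ : 0 < a₁)
    (η a₂ : ℝ) (hη : η = M.trace / p)
    (ha₂ : a₂ = ((M - η • (1 : Matrix (Fin p) (Fin p) ℝ))ᵀ * (M - η • 1)).trace)
    (MSE : ℝ → ℝ → ℝ)
    (hMSE : ∀ α β : ℝ, MSE α β
      = β^2 * a₁ + ((α • (1 : Matrix (Fin p) (Fin p) ℝ) - (1 - β) • M)ᵀ
          * (α • 1 - (1 - β) • M)).trace)
    (β₀ α₀ : ℝ) (hβ₀ : β₀ = a₂ / (a₂ + a₁)) (hα₀ : α₀ = (1 - β₀) * η) :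
    (∀ α β : ℝ, MSE α₀ β₀ ≤ MSE α β) ∧ MSE α₀ β₀ = (1 - β₀) * a₂ :=
  optimal_shrinkage_minimizer_general M a₁ ha₁ η a₂ hη ha₂ MSE hMSE β₀ α₀ hβ₀ hα₀
end

section
/- Under the covariance structure var(vec(S)) = τ₁(I+K)(M⊗M) + τ₂ vec(M)vec(M)ᵀ with E[S]=M and 1 + τ₁ + τ₂ − 2τ₁·a/n ≠ 0 where a = n·τ₁/(1+τ₂), the estimator θ̂ = b·(tr(S²)/p − (a/n)·(tr S)²/p) with b = (1 + τ₁ + τ₂ − 2τ₁ a/n)⁻¹ satisfies E[θ̂] = tr(M²)/p. -/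
open Matrix Kronecker MeasureTheory

/-- Column-stacking vectorization: `vec A (j, i) = A i j`. -/
def Matrix.vecCol {p : ℕ} (A : Matrix (Fin p) (Fin p) ℝ) : (Fin p × Fin p) → ℝ :=
  fun q => A q.2 q.1

/-- The commutation matrix `K = Σ_{i,j} (e_i e_jᵀ) ⊗ (e_j e_iᵀ)`. -/
def commutationMatrix (p : ℕ) : Matrix (Fin p × Fin p) (Fin p × Fin p) ℝ :=
  ∑ i : Fin p, ∑ j : Fin p,
    (Matrix.single i j (1 : ℝ)) ⊗ₖ (Matrix.single j i (1 : ℝ))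

/-!
Expanding the covariance identity entrywise gives every second moment
`E[S i j * S k l] = (1 + τ₂) M i j M k l + τ₁ (M i k M j l + M i l M j k)`; summing over the
appropriate index patterns yields `E tr(S²)` and `E (tr S)²` as combinations of `tr(M²)` and
`(tr M)²`. The choice `a (1 + τ₂) = n τ₁` cancels the `(tr M)²` terms, and `b` normalises the
remaining coefficient of `tr(M²)` to one.
-/

lemma commutationMatrix_apply {p : ℕ} (q r : Fin p × Fin p) :
    commutationMatrix p q r = if q.swap = r then 1 else 0 := by
  obtain ⟨q₁, q₂⟩ := q
  obtain ⟨r₁, r₂⟩ := r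
  simp only [commutationMatrix, Matrix.sum_apply, kroneckerMap_apply, single_apply,
    Prod.swap_prod_mk, Prod.mk.injEq]
  by_cases h : q₂ = r₁ ∧ q₁ = r₂
  · obtain ⟨rfl, rfl⟩ := h
    simp [ite_and, Finset.sum_ite_eq']
  · rw [if_neg h]
    refine Finset.sum_eq_zero fun i _ => Finset.sum_eq_zero fun j _ => ?_
    split_ifs <;> simp_all

lemma commutationMatrix_mul_kronecker_apply {p : ℕ} (A B : Matrix (Fin p) (Fin p) ℝ)
    (q r : Fin p × Fin p) :
    (commutationMatrix p * (A ⊗ₖ B)) q r = A q.2 r.1 * B q.1 r.2 := by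
  simp [mul_apply, commutationMatrix_apply, kroneckerMap_apply]

lemma trace_mul_self_eq_sum {n R : Type*} [Fintype n] [NonUnitalNonAssocSemiring R]
    (A : Matrix n n R) : (A * A).trace = ∑ i, ∑ j, A i j * A j i :=
  rfl

lemma trace_sq_eq_sum {n R : Type*} [Fintype n] [CommSemiring R] (A : Matrix n n R) :
    A.trace ^ 2 = ∑ i, ∑ j, A i i * A j j := by
  rw [sq, trace, Finset.sum_mul_sum]
  rfl

lemma integral_mul_eq_of_integral_centered_mul {Ω : Type*} [MeasurableSpace Ω]
    {μ : Measure Ω} [IsProbabilityMeasure μ] {X Y : Ω → ℝ} {m m' c : ℝ}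
    (hX : Integrable X μ) (hY : Integrable Y μ) (hXY : Integrable (fun ω => X ω * Y ω) μ)
    (hmX : ∫ ω, X ω ∂μ = m) (hmY : ∫ ω, Y ω ∂μ = m')
    (hc : ∫ ω, (X ω - m) * (Y ω - m') ∂μ = c) :
    ∫ ω, X ω * Y ω ∂μ = c + m * m' := by
  have hexpand : (fun ω => (X ω - m) * (Y ω - m'))
      = fun ω => X ω * Y ω - (m' * X ω + m * Y ω) + m * m' := by
    funext ω; ring
  rw [hexpand, integral_add, integral_sub, integral_add, integral_const_mul,
    integral_const_mul, hmX, hmY, integral_const, probReal_univ, one_smul] at hc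
  · linarith
  all_goals fun_prop

section SecondMoments

variable {p : ℕ} {Ω : Type*} [MeasurableSpace Ω] {μ : Measure Ω}
  {S : Ω → Matrix (Fin p) (Fin p) ℝ} {M : Matrix (Fin p) (Fin p) ℝ} {τ₁ τ₂ : ℝ}

lemma integrable_trace_mul_self
    (hInt2 : ∀ i j k l, Integrable (fun ω => S ω i j * S ω k l) μ) :
    Integrable (fun ω => (S ω * S ω).trace) μ := by
  simp only [trace_mul_self_eq_sum]
  exact integrable_finsetSum _ fun i _ => integrable_finsetSum _ fun j _ => hInt2 i j j i

lemma integrable_trace_sq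
    (hInt2 : ∀ i j k l, Integrable (fun ω => S ω i j * S ω k l) μ) :
    Integrable (fun ω => (S ω).trace ^ 2) μ := by
  simp only [trace_sq_eq_sum]
  exact integrable_finsetSum _ fun i _ => integrable_finsetSum _ fun j _ => hInt2 i i j j

variable [IsProbabilityMeasure μ]
    (hInt : ∀ i j, Integrable (fun ω => S ω i j) μ)
    (hInt2 : ∀ i j k l, Integrable (fun ω => S ω i j * S ω k l) μ)
    (hE : ∀ i j, ∫ ω, S ω i j ∂μ = M i j)
    (hVar : ∀ q r : Fin p × Fin p,
      ∫ ω, ((S ω).vecCol q - M.vecCol q) * ((S ω).vecCol r - M.vecCol r) ∂μ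
        = (τ₁ • ((1 + commutationMatrix p) * (M ⊗ₖ M))
            + τ₂ • Matrix.vecMulVec M.vecCol M.vecCol) q r)
include hInt hInt2 hE hVar

lemma integral_entry_mul_entry (i j k l : Fin p) :
    ∫ ω, S ω i j * S ω k l ∂μ
      = (1 + τ₂) * (M i j * M k l) + τ₁ * (M i k * M j l + M i l * M j k) := by
  have hcov := hVar (j, i) (l, k)
  simp only [Matrix.vecCol, Matrix.add_apply, Matrix.smul_apply, Matrix.add_mul, Matrix.one_mul,
    commutationMatrix_mul_kronecker_apply, kroneckerMap_apply, vecMulVec_apply,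
    smul_eq_mul] at hcov
  rw [integral_mul_eq_of_integral_centered_mul (hInt i j) (hInt k l) (hInt2 i j k l)
    (hE i j) (hE k l) hcov]
  ring

lemma integral_trace_mul_self :
    ∫ ω, (S ω * S ω).trace ∂μ = (1 + τ₁ + τ₂) * (M * M).trace + τ₁ * M.trace ^ 2 := by
  simp only [trace_mul_self_eq_sum, trace_sq_eq_sum]
  rw [integral_finsetSum _ fun i _ => integrable_finsetSum _ fun j _ => hInt2 i j j i]
  simp only [Finset.mul_sum, ← Finset.sum_add_distrib]
  refine Finset.sum_congr rfl fun i _ => ?_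
  rw [integral_finsetSum _ fun j _ => hInt2 i j j i]
  refine Finset.sum_congr rfl fun j _ => ?_
  rw [integral_entry_mul_entry hInt hInt2 hE hVar]
  ring

lemma integral_trace_sq (hM : M.IsSymm) :
    ∫ ω, (S ω).trace ^ 2 ∂μ = (1 + τ₂) * M.trace ^ 2 + 2 * τ₁ * (M * M).trace := by
  simp only [trace_mul_self_eq_sum, trace_sq_eq_sum]
  rw [integral_finsetSum _ fun i _ => integrable_finsetSum _ fun j _ => hInt2 i i j j]
  simp only [Finset.mul_sum, ← Finset.sum_add_distrib]
  refine Finset.sum_congr rfl fun i _ => ?_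
  rw [integral_finsetSum _ fun j _ => hInt2 i i j j]
  refine Finset.sum_congr rfl fun j _ => ?_
  rw [integral_entry_mul_entry hInt hInt2 hE hVar, hM.apply i j]
  ring

end SecondMoments

lemma sphericity_coefficients_cancel {n τ₁ τ₂ a b : ℝ} (hn : n ≠ 0) (hτ₂ : τ₂ ≠ -1)
    (ha : a = n * τ₁ / (1 + τ₂)) (hb : b = (1 + τ₁ + τ₂ - 2 * τ₁ * a / n)⁻¹)
    (hden : 1 + τ₁ + τ₂ - 2 * τ₁ * a / n ≠ 0) (X Y : ℝ) :
    b * ((1 + τ₁ + τ₂) * X + τ₁ * Y - a / n * ((1 + τ₂) * Y + 2 * τ₁ * X)) = X := by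
  have hτ₂' : 1 + τ₂ ≠ 0 := fun h => hτ₂ (by linarith)
  have ha' : a / n * (1 + τ₂) = τ₁ := by
    rw [ha]
    field_simp
  have hb' : b * (1 + τ₁ + τ₂ - 2 * τ₁ * a / n) = 1 := by
    rw [hb, inv_mul_cancel₀ hden]
  linear_combination X * hb' - b * Y * ha'

theorem unbiased_sphericity_estimator_general {p n : ℕ} (hn : 1 ≤ n)
    {Ω : Type*} [MeasurableSpace Ω]
    (μ : Measure Ω) [IsProbabilityMeasure μ]
    (S : Ω → Matrix (Fin p) (Fin p) ℝ) (M : Matrix (Fin p) (Fin p) ℝ)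
    (hMsymm : M.IsSymm)
    (hInt : ∀ i j, Integrable (fun ω => S ω i j) μ)
    (hInt2 : ∀ i j k l, Integrable (fun ω => S ω i j * S ω k l) μ)
    (hE : ∀ i j, ∫ ω, S ω i j ∂μ = M i j)
    (τ₁ τ₂ : ℝ) (hτ₂ : τ₂ ≠ -1)
    (hVar : ∀ q r : Fin p × Fin p,
      ∫ ω, ((S ω).vecCol q - M.vecCol q) * ((S ω).vecCol r - M.vecCol r) ∂μ
        = (τ₁ • ((1 + commutationMatrix p) * (M ⊗ₖ M))
            + τ₂ • Matrix.vecMulVec M.vecCol M.vecCol) q r)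
    (a b : ℝ) (ha : a = n * τ₁ / (1 + τ₂))
    (hb : b = (1 + τ₁ + τ₂ - 2 * τ₁ * a / n)⁻¹)
    (hden : 1 + τ₁ + τ₂ - 2 * τ₁ * a / n ≠ 0) :
    ∫ ω, b * ((S ω * S ω).trace / p - (a / n) * ((S ω).trace)^2 / p) ∂μ
      = (M * M).trace / p := by
  have hn' : (n : ℝ) ≠ 0 := Nat.cast_ne_zero.mpr (by omega)
  have hcancel := sphericity_coefficients_cancel hn' hτ₂ ha hb hden (M * M).trace (M.trace ^ 2)
  rw [integral_const_mul, integral_sub ((integrable_trace_mul_self hInt2).div_const _)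
      (((integrable_trace_sq hInt2).const_mul _).div_const _),
    integral_div, integral_div, integral_const_mul,
    integral_trace_mul_self hInt hInt2 hE hVar, integral_trace_sq hInt hInt2 hE hVar hMsymm]
  linear_combination hcancel / p

theorem unbiased_sphericity_estimator {p n : ℕ} (hp : 0 < p) (hn : 1 ≤ n)
    {Ω : Type*} [MeasurableSpace Ω]
    (μ : Measure Ω) [IsProbabilityMeasure μ]
    (S : Ω → Matrix (Fin p) (Fin p) ℝ) (M : Matrix (Fin p) (Fin p) ℝ)
    (hSsymm : ∀ ω, (S ω).IsSymm) (hMsymm : M.IsSymm)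
    (hInt : ∀ i j, Integrable (fun ω => S ω i j) μ)
    (hInt2 : ∀ i j k l, Integrable (fun ω => S ω i j * S ω k l) μ)
    (hE : ∀ i j, ∫ ω, S ω i j ∂μ = M i j)
    (τ₁ τ₂ : ℝ) (hτ₂ : τ₂ ≠ -1)
    (hVar : ∀ q r : Fin p × Fin p,
      ∫ ω, ((S ω).vecCol q - M.vecCol q) * ((S ω).vecCol r - M.vecCol r) ∂μ
        = (τ₁ • ((1 + commutationMatrix p) * (M ⊗ₖ M))
            + τ₂ • Matrix.vecMulVec M.vecCol M.vecCol) q r)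
    (a b : ℝ) (ha : a = n * τ₁ / (1 + τ₂))
    (hb : b = (1 + τ₁ + τ₂ - 2 * τ₁ * a / n)⁻¹)
    (hden : 1 + τ₁ + τ₂ - 2 * τ₁ * a / n ≠ 0) :
    ∫ ω, b * ((S ω * S ω).trace / p - (a / n) * ((S ω).trace)^2 / p) ∂μ
      = (M * M).trace / p :=
  unbiased_sphericity_estimator_general hn μ S M hMsymm hInt hInt2 hE τ₁ τ₂ hτ₂ hVar a b ha hb hden
end
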